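/- Let K, η, σ ∈ ℝ and let H(u,y,z) = K·exp(2(ηy − σz)). Then the five vector fields on ℝ⁴ given by k = ∂_v, X₂ = ∂_u, X₃ = ∂_z + σ·(u∂_u − v∂_v), X₄ = ∂_y − η·(u∂_u − v∂_v), and X₅ = u·(η∂_z + σ∂_y) + (σy + ηz)·∂_v are all Killing vectors of the pp-wave metric g_H, i.e. each satisfies ℒ_X g_H = 0. -/

import Mathlib

/-- Partial derivative ∂_c f at p on ℝ⁴ (coordinates (u,v,y,z) = indices 0,1,2,3). -/
noncomputable def pd (f : (Fin 4 → ℝ) → ℝ) (c : Fin 4) (p : Fin 4 → ℝ) : ℝ :=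
  fderiv ℝ f p (Pi.single c 1)

/-- Lie derivative of a bilinear-form-valued map g along the vector field Y:
(ℒ_Y g)_{ij} = Σ_c Y^c ∂_c g_{ij} + Σ_c g_{cj} ∂_i Y^c + Σ_c g_{ic} ∂_j Y^c. -/
noncomputable def lieDeriv (Y : (Fin 4 → ℝ) → (Fin 4 → ℝ))
    (g : (Fin 4 → ℝ) → Fin 4 → Fin 4 → ℝ) (p : Fin 4 → ℝ) (i j : Fin 4) : ℝ :=
  (∑ c, Y p c * pd (fun q => g q i j) c p)
  + (∑ c, g p c j * pd (fun q => Y q c) i p)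
  + (∑ c, g p i c * pd (fun q => Y q c) j p)

/-- The pp-wave metric with metric function H(u,y,z):
ds² = −2 du dv − 2H du² + dy² + dz². -/
noncomputable def ppMetric (H : (Fin 3 → ℝ) → ℝ) (p : Fin 4 → ℝ) : Fin 4 → Fin 4 → ℝ :=
  fun i j =>
    if i = 0 ∧ j = 0 then -2 * H ![p 0, p 2, p 3]
    else if (i = 0 ∧ j = 1) ∨ (i = 1 ∧ j = 0) then -1
    else if (i = 2 ∧ j = 2) ∨ (i = 3 ∧ j = 3) then 1
    else 0

lemma hasF_coord (i : Fin 4) (p : Fin 4 → ℝ) :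
    HasFDerivAt (fun q : Fin 4 → ℝ => q i)
      (ContinuousLinearMap.proj (R := ℝ) (φ := fun _ : Fin 4 => ℝ) i) p :=
  (ContinuousLinearMap.proj (R := ℝ) (φ := fun _ : Fin 4 => ℝ) i).hasFDerivAt

lemma pd_hasFDeriv {f : (Fin 4 → ℝ) → ℝ} {L : (Fin 4 → ℝ) →L[ℝ] ℝ} {p : Fin 4 → ℝ}
    (h : HasFDerivAt f L p) (c : Fin 4) : pd f c p = L (Pi.single c 1) := by
  unfold pd; rw [h.fderiv]

lemma pd_const (a : ℝ) (c : Fin 4) (p : Fin 4 → ℝ) : pd (fun _ => a) c p = 0 := by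
  simp [pd]

lemma pd_cmul (a : ℝ) (i c : Fin 4) (p : Fin 4 → ℝ) :
    pd (fun q => a * q i) c p = a * (Pi.single c 1 : Fin 4 → ℝ) i := by
  rw [pd_hasFDeriv ((hasF_coord i p).const_mul a)]; simp

lemma pd_neg_cmul (a : ℝ) (i c : Fin 4) (p : Fin 4 → ℝ) :
    pd (fun q => -(a * q i)) c p = -(a * (Pi.single c 1 : Fin 4 → ℝ) i) := by
  rw [pd_hasFDeriv (f := fun q => -(a * q i)) ((hasF_coord i p).const_mul a).neg]; simp

lemma pd_add_cmul (a b : ℝ) (i j c : Fin 4) (p : Fin 4 → ℝ) :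
    pd (fun q => a * q i + b * q j) c p
      = a * (Pi.single c 1 : Fin 4 → ℝ) i + b * (Pi.single c 1 : Fin 4 → ℝ) j := by
  rw [pd_hasFDeriv (f := fun q => a * q i + b * q j) (((hasF_coord i p).const_mul a).add ((hasF_coord j p).const_mul b))]; simp

lemma pd_g00' (K η σ : ℝ) (c : Fin 4) (p : Fin 4 → ℝ) :
    pd (fun q => -(2 * (K * Real.exp (2 * (η * q 2 - σ * q 3))))) c p
      = -(2 * (K * Real.exp (2 * (η * p 2 - σ * p 3))) *
        (2 * (η * (Pi.single c 1 : Fin 4 → ℝ) 2 - σ * (Pi.single c 1 : Fin 4 → ℝ) 3))) := by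
  have h1 := ((((hasF_coord 2 p).const_mul η).sub ((hasF_coord 3 p).const_mul σ)).const_mul
    (2 : ℝ)).exp
  have h2 := ((h1.const_mul K).const_mul (2 : ℝ)).neg
  rw [pd_hasFDeriv (f := fun q => -(2 * (K * Real.exp (2 * (η * q 2 - σ * q 3))))) h2]
  simp
  ring

set_option maxHeartbeats 2000000 in
set_option linter.unnecessarySeqFocus false in
/-- for H = K·exp(2(ηy − σz)), the five vector fields k = ∂_v, X₂ = ∂_u,
X₃ = ∂_z + σ(u∂_u − v∂_v), X₄ = ∂_y − η(u∂_u − v∂_v), X₅ = u(η∂_z + σ∂_y) + (σy+ηz)∂_v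
are Killing vectors of g_H. -/
theorem killing_vectors_class9
    (K η σ : ℝ)
    (H : (Fin 3 → ℝ) → ℝ) (hH : H = fun q => K * Real.exp (2 * (η * q 1 - σ * q 2)))
    (k X₂ X₃ X₄ X₅ : (Fin 4 → ℝ) → (Fin 4 → ℝ))
    (hk : k = fun _ => ![0, 1, 0, 0])
    (hX₂ : X₂ = fun _ => ![1, 0, 0, 0])
    (hX₃ : X₃ = fun p => ![σ * p 0, -(σ * p 1), 0, 1])
    (hX₄ : X₄ = fun p => ![-(η * p 0), η * p 1, 1, 0])
    (hX₅ : X₅ = fun p => ![0, σ * p 2 + η * p 3, σ * p 0, η * p 0]) :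
    (∀ p i j, lieDeriv k (ppMetric H) p i j = 0) ∧
    (∀ p i j, lieDeriv X₂ (ppMetric H) p i j = 0) ∧
    (∀ p i j, lieDeriv X₃ (ppMetric H) p i j = 0) ∧
    (∀ p i j, lieDeriv X₄ (ppMetric H) p i j = 0) ∧
    (∀ p i j, lieDeriv X₅ (ppMetric H) p i j = 0) := by
  subst hH hk hX₂ hX₃ hX₄ hX₅
  refine ⟨?_, ?_, ?_, ?_, ?_⟩ <;> intro p i j <;> fin_cases i <;> fin_cases j <;>
    simp [lieDeriv, Fin.sum_univ_four, ppMetric, pd_const, pd_cmul, pd_neg_cmul,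
      pd_add_cmul, pd_g00', Pi.single_apply] <;>
    ring_nf
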